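/- Sufficient decrease of the surrogate minimization step (Lemma A.3, first claim): In the surrogate setup, let τ > 0, let Ω' ∈ 𝒮, and let Ω⁺ be a minimizer of g(·, Ω') over 𝒮. Then f(Ω') − f(Ω⁺) ≥ ((τ² − ‖W‖₂²)/2) · ‖Ω⁺ − Ω'‖_F². -/
import Mathlib


open Matrix
open scoped Classical

noncomputable section

/-- Squared Euclidean norm of a vector. -/
def sqnorm {ι : Type*} [Fintype ι] (v : ι → ℝ) : ℝ := ∑ i, v i ^ 2

/-- Spectral norm (ℓ₂ operator norm) of a real matrix:
the supremum of `‖A v‖₂` over vectors `v` with `‖v‖₂ ≤ 1`. -/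
def specNorm {ι κ : Type*} [Fintype ι] [Fintype κ] (A : Matrix ι κ ℝ) : ℝ :=
  sSup {c : ℝ | ∃ v : κ → ℝ, sqnorm v ≤ 1 ∧ c = Real.sqrt (sqnorm (A.mulVec v))}

/-- (Columnwise) vectorization of `Ω ∈ ℝ^{(p+1)×p}`, using the product index set
`Fin (p+1) × Fin p` for `ℝ^{(p+1)p}`. -/
def vecM {p : ℕ} (Ω : Matrix (Fin (p + 1)) (Fin p) ℝ) : Fin (p + 1) × Fin p → ℝ :=
  fun ik => Ω ik.1 ik.2

/-- The convex penalty
`P(Ω) = Σ_j (λ_b)_j |b_j| + Σ_{j,k} (Λ_Φ)_{jk} |Φ_{jk}| + Σ_k (λ_Ω)_k ‖Ω[:,k]‖₂`,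
where `Ω = [b, Φᵀ]ᵀ`, i.e. `b_j = Ω 0 j` and `Φ j k = Ω k.succ j`. -/
def Pen {p : ℕ} (lb : Fin p → ℝ) (LPhi : Matrix (Fin p) (Fin p) ℝ) (lO : Fin p → ℝ)
    (Ω : Matrix (Fin (p + 1)) (Fin p) ℝ) : ℝ :=
  (∑ j, lb j * |Ω 0 j|) + (∑ j, ∑ k, LPhi j k * |Ω k.succ j|)
    + ∑ k, lO k * Real.sqrt (∑ i, Ω i k ^ 2)

/-- The quadratic loss `ℓ(Ω) = (1/2)‖y − W vec(Ω)‖₂²`. -/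
def lossL {n p : ℕ} (W : Matrix (Fin n) (Fin (p + 1) × Fin p) ℝ) (y : Fin n → ℝ)
    (Ω : Matrix (Fin (p + 1)) (Fin p) ℝ) : ℝ :=
  (1 / 2) * ∑ i, (y i - W.mulVec (vecM Ω) i) ^ 2

/-- The objective `f(Ω) = ℓ(Ω) + P(Ω)`. -/
def fObj {n p : ℕ} (W : Matrix (Fin n) (Fin (p + 1) × Fin p) ℝ) (y : Fin n → ℝ)
    (lb : Fin p → ℝ) (LPhi : Matrix (Fin p) (Fin p) ℝ) (lO : Fin p → ℝ)
    (Ω : Matrix (Fin (p + 1)) (Fin p) ℝ) : ℝ :=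
  lossL W y Ω + Pen lb LPhi lO Ω

/-- The surrogate
`g(Ω, Ω') = ℓ(Ω') − ⟨Wᵀ(y − W vec Ω'), vec Ω − vec Ω'⟩ + (τ²/2)‖Ω − Ω'‖_F² + P(Ω)`. -/
def gSur {n p : ℕ} (W : Matrix (Fin n) (Fin (p + 1) × Fin p) ℝ) (y : Fin n → ℝ)
    (lb : Fin p → ℝ) (LPhi : Matrix (Fin p) (Fin p) ℝ) (lO : Fin p → ℝ) (τ : ℝ)
    (Ω Ω' : Matrix (Fin (p + 1)) (Fin p) ℝ) : ℝ :=
  lossL W y Ω'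
    - (∑ u : Fin (p + 1) × Fin p,
        Wᵀ.mulVec (fun i => y i - W.mulVec (vecM Ω') i) u * (vecM Ω u - vecM Ω' u))
    + (τ ^ 2 / 2) * (∑ i, ∑ k, (Ω i k - Ω' i k) ^ 2)
    + Pen lb LPhi lO Ω

/-- The feasible set `𝒮 = {Ω = [b, Φᵀ]ᵀ : Φ = Φᵀ}`. -/
def Sfeas (p : ℕ) : Set (Matrix (Fin (p + 1)) (Fin p) ℝ) :=
  {Ω | ∀ j k : Fin p, Ω j.succ k = Ω k.succ j}

lemma sqnorm_nonneg {ι : Type*} [Fintype ι] (v : ι → ℝ) : 0 ≤ sqnorm v :=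
  Finset.sum_nonneg fun _ _ => sq_nonneg _

lemma specNorm_set_bddAbove {ι κ : Type*} [Fintype ι] [Fintype κ] (A : Matrix ι κ ℝ) :
    BddAbove {c : ℝ | ∃ v : κ → ℝ, sqnorm v ≤ 1 ∧ c = Real.sqrt (sqnorm (A.mulVec v))} := by
  refine ⟨Real.sqrt (∑ i, (∑ u, |A i u|) ^ 2), ?_⟩
  rintro c ⟨v, hv, rfl⟩
  apply Real.sqrt_le_sqrt
  apply Finset.sum_le_sum
  intro i _
  have hvb : ∀ u, |v u| ≤ 1 := by
    intro u
    have h1 : v u ^ 2 ≤ 1 := le_trans (Finset.single_le_sum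
      (f := fun u => v u ^ 2) (fun _ _ => sq_nonneg _) (Finset.mem_univ u)) hv
    nlinarith [abs_nonneg (v u), sq_abs (v u)]
  have hb : |A.mulVec v i| ≤ ∑ u, |A i u| := by
    calc |A.mulVec v i| ≤ ∑ u, |A i u * v u| := Finset.abs_sum_le_sum_abs _ _
      _ ≤ ∑ u, |A i u| := by
          refine Finset.sum_le_sum fun u _ => ?_
          rw [abs_mul]
          exact mul_le_of_le_one_right (abs_nonneg _) (hvb u)
  calc A.mulVec v i ^ 2 = |A.mulVec v i| ^ 2 := (sq_abs _).symm
    _ ≤ (∑ u, |A i u|) ^ 2 := pow_le_pow_left₀ (abs_nonneg _) hb 2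

lemma specNorm_nonneg {ι κ : Type*} [Fintype ι] [Fintype κ] (A : Matrix ι κ ℝ) :
    0 ≤ specNorm A := by
  have h0 : (0:ℝ) ∈ {c : ℝ | ∃ v : κ → ℝ, sqnorm v ≤ 1 ∧ c = Real.sqrt (sqnorm (A.mulVec v))} := by
    refine ⟨0, by simp [sqnorm], ?_⟩
    simp [sqnorm, Matrix.mulVec, dotProduct]
  exact le_csSup (specNorm_set_bddAbove A) h0

lemma sqnorm_mulVec_le {ι κ : Type*} [Fintype ι] [Fintype κ] (A : Matrix ι κ ℝ) (v : κ → ℝ) :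
    sqnorm (A.mulVec v) ≤ specNorm A ^ 2 * sqnorm v := by
  rcases eq_or_lt_of_le (sqnorm_nonneg v) with h0 | h0
  · have hvz : v = 0 := by
      funext u
      have := (Finset.sum_eq_zero_iff_of_nonneg
        (fun u _ => sq_nonneg (v u))).mp h0.symm u (Finset.mem_univ u)
      exact pow_eq_zero_iff two_ne_zero |>.mp this
    simp [hvz, sqnorm, Matrix.mulVec, dotProduct]
  · set s := Real.sqrt (sqnorm v) with hs
    have hspos : 0 < s := Real.sqrt_pos.mpr h0
    set u : κ → ℝ := fun k => v k / s with hu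
    have hunorm : sqnorm u = 1 := by
      simp only [sqnorm, hu, div_pow]
      rw [← Finset.sum_div, Real.sq_sqrt (le_of_lt h0)]
      exact div_self (ne_of_gt h0)
    have hsq : sqnorm (A.mulVec u) = sqnorm (A.mulVec v) / s ^ 2 := by
      simp only [sqnorm, Matrix.mulVec, dotProduct, hu]
      rw [Finset.sum_div]
      refine Finset.sum_congr rfl fun i _ => ?_
      rw [show (∑ x, A i x * (v x / s)) = (∑ x, A i x * v x) / s by
        rw [Finset.sum_div]; exact Finset.sum_congr rfl fun k _ => by ring]
      rw [div_pow]
    have hmem : Real.sqrt (sqnorm (A.mulVec u)) ≤ specNorm A :=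
      le_csSup (specNorm_set_bddAbove A) ⟨u, le_of_eq hunorm, rfl⟩
    have heq : Real.sqrt (sqnorm (A.mulVec u)) = Real.sqrt (sqnorm (A.mulVec v)) / s := by
      rw [hsq, Real.sqrt_div (sqnorm_nonneg _), Real.sqrt_sq (le_of_lt hspos)]
    have h1 : Real.sqrt (sqnorm (A.mulVec v)) ≤ specNorm A * s := by
      rw [heq, div_le_iff₀ hspos] at hmem
      exact hmem
    have h2 : sqnorm (A.mulVec v) = Real.sqrt (sqnorm (A.mulVec v)) ^ 2 :=
      (Real.sq_sqrt (sqnorm_nonneg _)).symm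
    calc sqnorm (A.mulVec v) = Real.sqrt (sqnorm (A.mulVec v)) ^ 2 := h2
      _ ≤ (specNorm A * s) ^ 2 := pow_le_pow_left₀ (Real.sqrt_nonneg _) h1 2
      _ = specNorm A ^ 2 * sqnorm v := by
          rw [mul_pow, hs, Real.sq_sqrt (le_of_lt h0)]

/-- **Sufficient decrease of the surrogate minimization step** (Lemma A.3, first claim):
if `Ω⁺` minimizes `g(·, Ω')` over `𝒮`, then
`f(Ω') − f(Ω⁺) ≥ ((τ² − ‖W‖₂²)/2)‖Ω⁺ − Ω'‖_F²`. -/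
theorem surrogate_sufficient_decrease {n p : ℕ} (hn : 1 ≤ n) (hp : 1 ≤ p)
    (W : Matrix (Fin n) (Fin (p + 1) × Fin p) ℝ) (y : Fin n → ℝ)
    (lb : Fin p → ℝ) (hlb : ∀ j, 0 ≤ lb j)
    (LPhi : Matrix (Fin p) (Fin p) ℝ) (hLPhi : ∀ j k, 0 ≤ LPhi j k)
    (lO : Fin p → ℝ) (hlO : ∀ k, 0 ≤ lO k)
    (τ : ℝ) (hτ : 0 < τ)
    (Ω' Ωp : Matrix (Fin (p + 1)) (Fin p) ℝ)
    (hΩ' : Ω' ∈ Sfeas p) (hΩp : Ωp ∈ Sfeas p)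
    (hmin : ∀ Ω ∈ Sfeas p,
      gSur W y lb LPhi lO τ Ωp Ω' ≤ gSur W y lb LPhi lO τ Ω Ω') :
    ((τ ^ 2 - specNorm W ^ 2) / 2) * (∑ i, ∑ k, (Ωp i k - Ω' i k) ^ 2)
      ≤ fObj W y lb LPhi lO Ω' - fObj W y lb LPhi lO Ωp := by
  classical
  set dv : Fin (p + 1) × Fin p → ℝ := fun u => vecM Ωp u - vecM Ω' u with hdv
  set D : ℝ := ∑ i, ∑ k, (Ωp i k - Ω' i k) ^ 2 with hDdef
  -- Frobenius norm of the difference equals sqnorm of the vectorized difference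
  have hDval : sqnorm dv = D := by
    simp only [sqnorm, hdv, vecM, hDdef]
    rw [Fintype.sum_prod_type]
  -- linearity of mulVec
  have hWd : ∀ i, W.mulVec (vecM Ωp) i = W.mulVec (vecM Ω') i + W.mulVec dv i := by
    intro i
    simp only [Matrix.mulVec, dotProduct, hdv]
    rw [← Finset.sum_add_distrib]
    exact Finset.sum_congr rfl fun u _ => by ring
  -- adjoint identity
  have hadj : (∑ u : Fin (p + 1) × Fin p,
        Wᵀ.mulVec (fun i => y i - W.mulVec (vecM Ω') i) u * (vecM Ωp u - vecM Ω' u))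
      = ∑ i, (y i - W.mulVec (vecM Ω') i) * W.mulVec dv i := by
    simp only [Matrix.mulVec, dotProduct, Matrix.transpose_apply, hdv]
    calc (∑ u : Fin (p + 1) × Fin p,
          (∑ i, W i u * (y i - ∑ v, W i v * vecM Ω' v)) * (vecM Ωp u - vecM Ω' u))
        = ∑ u : Fin (p + 1) × Fin p,
            ∑ i, W i u * (y i - ∑ v, W i v * vecM Ω' v) * (vecM Ωp u - vecM Ω' u) := by
          exact Finset.sum_congr rfl fun u _ => Finset.sum_mul _ _ _
      _ = ∑ i, ∑ u : Fin (p + 1) × Fin p,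
            W i u * (y i - ∑ v, W i v * vecM Ω' v) * (vecM Ωp u - vecM Ω' u) :=
          Finset.sum_comm
      _ = ∑ i, (y i - ∑ v, W i v * vecM Ω' v) * ∑ u, W i u * (vecM Ωp u - vecM Ω' u) := by
          refine Finset.sum_congr rfl fun i _ => ?_
          rw [Finset.mul_sum]
          exact Finset.sum_congr rfl fun u _ => by ring
  -- expansion of the quadratic loss
  have hloss : lossL W y Ωp = lossL W y Ω'
      - (∑ u : Fin (p + 1) × Fin p,
          Wᵀ.mulVec (fun i => y i - W.mulVec (vecM Ω') i) u * (vecM Ωp u - vecM Ω' u))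
      + (1 / 2) * sqnorm (W.mulVec dv) := by
    rw [hadj]
    simp only [lossL, sqnorm]
    have hsum : ∑ i, (y i - W.mulVec (vecM Ωp) i) ^ 2
        = ∑ i, ((y i - W.mulVec (vecM Ω') i) ^ 2
            - 2 * ((y i - W.mulVec (vecM Ω') i) * W.mulVec dv i)
            + W.mulVec dv i ^ 2) := by
      refine Finset.sum_congr rfl fun i _ => ?_
      rw [hWd i]; ring
    rw [hsum, Finset.sum_add_distrib, Finset.sum_sub_distrib, ← Finset.mul_sum]
    ring
  -- f(Ωp) in terms of the surrogate
  have key1 : fObj W y lb LPhi lO Ωp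
      = gSur W y lb LPhi lO τ Ωp Ω' - (τ ^ 2 / 2) * D + (1 / 2) * sqnorm (W.mulVec dv) := by
    simp only [fObj, gSur, ← hDdef]
    rw [hloss, hadj]
    ring
  -- surrogate at Ωp is below f(Ω')
  have key2 : gSur W y lb LPhi lO τ Ωp Ω' ≤ fObj W y lb LPhi lO Ω' := by
    have h1 := hmin Ω' hΩ'
    have h2 : gSur W y lb LPhi lO τ Ω' Ω' = fObj W y lb LPhi lO Ω' := by
      simp [gSur, fObj]
    linarith
  -- spectral norm bound
  have key3 : sqnorm (W.mulVec dv) ≤ specNorm W ^ 2 * D := by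
    have h := sqnorm_mulVec_le W dv
    rwa [hDval] at h
  linarith
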